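/- For all real numbers φ, θ, z: exp(φ•(cos θ • X + sin θ • Y)) · exp(z•Z) equals the 2×2 real matrix with entries M₁₁ = cosh(φ/2)cos(z/2) + sinh(φ/2)cos(θ + z/2), M₁₂ = −cosh(φ/2)sin(z/2) − sinh(φ/2)sin(θ + z/2), M₂₁ = cosh(φ/2)sin(z/2) − sinh(φ/2)sin(θ + z/2), M₂₂ = cosh(φ/2)cos(z/2) − sinh(φ/2)cos(θ + z/2). -/

import Mathlib

open scoped Matrix

/-- The matrix `X` generating `sl(2,ℝ)`. -/
noncomputable def X : Matrix (Fin 2) (Fin 2) ℝ := (1 / 2 : ℝ) • !![1, 0; 0, -1]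

/-- The matrix `Y` generating `sl(2,ℝ)`. -/
noncomputable def Y : Matrix (Fin 2) (Fin 2) ℝ := (1 / 2 : ℝ) • !![0, -1; -1, 0]

/-- The matrix `Z` generating `sl(2,ℝ)`. -/
noncomputable def Z : Matrix (Fin 2) (Fin 2) ℝ := (1 / 2 : ℝ) • !![0, -1; 1, 0]

/-!
`cos θ • X + sin θ • Y` is half of a reflection matrix `R`, with `R * R = 1`, and `Z` is half of
the rotation generator `J`, with `J * J = -1`. Splitting the exponential series into even and odd
terms gives `exp (t • R) = cosh t • 1 + sinh t • R` and `exp (t • J) = cos t • 1 + sin t • J`;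
multiplying the two and applying the addition formulas for `cos` and `sin` gives the entries.
-/

open NormedSpace

section ExpClosedForm

open Nat

variable {A : Type*} [Ring A] [Algebra ℝ A] [TopologicalSpace A] [IsTopologicalRing A]
  [T2Space A]

theorem NormedSpace.exp_eq_add_of_hasSum_even_odd {x c s : A}
    (hc : HasSum (fun k => ((2 * k)! : ℝ)⁻¹ • x ^ (2 * k)) c)
    (hs : HasSum (fun k => ((2 * k + 1)! : ℝ)⁻¹ • x ^ (2 * k + 1)) s) :
    exp x = c + s := by
  rw [exp_eq_tsum ℝ]
  exact (hc.even_add_odd (f := fun n => (n ! : ℝ)⁻¹ • x ^ n) hs).tsum_eq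

theorem NormedSpace.exp_smul_of_mul_self_eq_one [ContinuousSMul ℝ A] (t : ℝ) {B : A}
    (hB : B * B = 1) : exp (t • B) = Real.cosh t • 1 + Real.sinh t • B := by
  have hpow (k : ℕ) : B ^ (2 * k) = 1 := by rw [pow_mul, sq, hB, one_pow]
  refine exp_eq_add_of_hasSum_even_odd ?_ ?_
  · convert (Real.hasSum_cosh t).smul_const (1 : A) using 2 with k
    rw [smul_pow, hpow, smul_smul, div_eq_inv_mul]
  · convert (Real.hasSum_sinh t).smul_const B using 2 with k
    rw [smul_pow, pow_succ B, hpow, one_mul, smul_smul, div_eq_inv_mul]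

theorem NormedSpace.exp_smul_of_mul_self_eq_neg_one [ContinuousSMul ℝ A] (t : ℝ) {B : A}
    (hB : B * B = -1) : exp (t • B) = Real.cos t • 1 + Real.sin t • B := by
  have hpow (k : ℕ) : B ^ (2 * k) = (-1 : ℝ) ^ k • 1 := by
    rw [pow_mul, sq, hB, ← neg_one_smul ℝ (1 : A), smul_pow, one_pow]
  refine exp_eq_add_of_hasSum_even_odd ?_ ?_
  · convert (Real.hasSum_cos t).smul_const (1 : A) using 2 with k
    rw [smul_pow, hpow, smul_smul, smul_smul]
    ring_nf
  · convert (Real.hasSum_sin t).smul_const B using 2 with k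
    rw [smul_pow, pow_succ B, hpow, smul_mul_assoc, one_mul, smul_smul, smul_smul]
    ring_nf

end ExpClosedForm

noncomputable def reflectionMatrix (θ : ℝ) : Matrix (Fin 2) (Fin 2) ℝ :=
  !![Real.cos θ, -Real.sin θ; -Real.sin θ, -Real.cos θ]

theorem reflectionMatrix_mul_self (θ : ℝ) : reflectionMatrix θ * reflectionMatrix θ = 1 := by
  ext i j
  fin_cases i <;> fin_cases j <;> simp [reflectionMatrix, Matrix.mul_apply] <;> ring_nf <;> simp

theorem smul_cos_smul_X_add_sin_smul_Y (φ θ : ℝ) :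
    φ • (Real.cos θ • X + Real.sin θ • Y) = (φ / 2) • reflectionMatrix θ := by
  ext i j
  fin_cases i <;> fin_cases j <;> simp [X, Y, reflectionMatrix] <;> ring

theorem rotationGenerator_mul_self : !![(0 : ℝ), -1; 1, 0] * !![(0 : ℝ), -1; 1, 0] = -1 := by
  ext i j
  fin_cases i <;> fin_cases j <;> simp [Matrix.mul_apply]

theorem smul_Z (z : ℝ) : z • Z = (z / 2) • !![(0 : ℝ), -1; 1, 0] := by
  rw [Z, smul_smul, mul_one_div]

/-- The cylindrical-coordinates matrix form of elements of `SL(2,ℝ)`. -/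
theorem sl2_cylindrical_matrix (φ θ z : ℝ) :
    NormedSpace.exp (φ • (Real.cos θ • X + Real.sin θ • Y)) *
        NormedSpace.exp (z • Z) =
      !![Real.cosh (φ / 2) * Real.cos (z / 2) + Real.sinh (φ / 2) * Real.cos (θ + z / 2),
          -(Real.cosh (φ / 2) * Real.sin (z / 2)) - Real.sinh (φ / 2) * Real.sin (θ + z / 2);
          Real.cosh (φ / 2) * Real.sin (z / 2) - Real.sinh (φ / 2) * Real.sin (θ + z / 2),
          Real.cosh (φ / 2) * Real.cos (z / 2) - Real.sinh (φ / 2) * Real.cos (θ + z / 2)] := by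
  rw [smul_cos_smul_X_add_sin_smul_Y, smul_Z,
    exp_smul_of_mul_self_eq_one _ (reflectionMatrix_mul_self θ),
    exp_smul_of_mul_self_eq_neg_one _ rotationGenerator_mul_self]
  ext i j
  fin_cases i <;> fin_cases j <;>
    simp [reflectionMatrix, Matrix.mul_apply, Real.cos_add, Real.sin_add] <;> ring
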